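/- arXiv:2207.03193 — 4 statements merged into one kernel-verified Lean document; each statement's English description precedes it below -/
import Mathlib

section
/- Suppose the commuting graph Γ(G,A) of A-orbits is an F-graph with no singular vertex (i.e., every vertex has degree at most 2). Then Γ(G,A) is isomorphic either to a path graph P_n with n ≤ 3 vertices or to the cycle C_3. -/
open MulAction

namespace Paper

variable (A G : Type*) [Group A] [Group G] [MulDistribMulAction A G]

/-- The vertex set of the commuting graph of `A`-orbits: the `A`-orbits of
nonidentity elements of `G`, realized as nontrivial classes in the orbit quotient. -/
def Vertex :=
  {o : Quotient (MulAction.orbitRel A G) // o ≠ Quotient.mk (MulAction.orbitRel A G) (1 : G)}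

/-- The commuting graph `Γ(G,A)` of `A`-orbits: two distinct orbits are adjacent
iff they contain commuting representatives. -/
def commGraph : SimpleGraph (Vertex A G) where
  Adj u v := u ≠ v ∧ ∃ x y : G,
      Quotient.mk (MulAction.orbitRel A G) x = u.1 ∧
      Quotient.mk (MulAction.orbitRel A G) y = v.1 ∧ Commute x y
  symm := ⟨by
    rintro u v ⟨h, x, y, hx, hy, hc⟩
    exact ⟨h.symm, y, x, hy, hx, hc.symm⟩⟩
  loopless := ⟨fun u h => h.1 rfl⟩

/-- The vertex `x^A` determined by a nonidentity element `x` of `G`. -/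
def vert (x : G) (hx : x ≠ 1) : Vertex A G :=
  ⟨Quotient.mk (MulAction.orbitRel A G) x, fun h => hx (by
    obtain ⟨a, ha⟩ := MulAction.mem_orbit_iff.mp (Quotient.exact h)
    exact ha.symm.trans (smul_one a))⟩

/-- An `F`-graph: a connected graph with at most one vertex of degree at least three. -/
def IsFGraph {V : Type*} (Γ : SimpleGraph V) : Prop :=
  Γ.Connected ∧ ∀ u v : V, 3 ≤ (Γ.neighborSet u).ncard → 3 ≤ (Γ.neighborSet v).ncard → u = v

/-- A subgroup of `G` is `A`-invariant if it is stable under the action of `A`. -/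
def AInv (H : Subgroup G) : Prop := ∀ (a : A), ∀ x ∈ H, a • x ∈ H

/-- An Eppo-group: every nontrivial element has prime power order. -/
def IsEppo (H : Type*) [Group H] : Prop := ∀ x : H, x ≠ 1 → IsPrimePow (orderOf x)

/-- The `p`-core `O_p(G)`: the join of all normal `p`-subgroups of `G`
(i.e. the largest normal `p`-subgroup of a finite group `G`). -/
def pCore (p : ℕ) (G : Type*) [Group G] : Subgroup G :=
  ⨆ N : {N : Subgroup G // N.Normal ∧ IsPGroup p N}, (N : Subgroup G)

instance pCore_normal (p : ℕ) (G : Type*) [Group G] : (pCore p G).Normal := by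
  constructor
  intro x hx g
  refine Subgroup.iSup_induction (C := fun y => g * y * g⁻¹ ∈ pCore p G) _ hx ?_ ?_ ?_
  · rintro ⟨N, hN, hNp⟩ y hy
    exact Subgroup.mem_iSup_of_mem ⟨N, hN, hNp⟩ (hN.conj_mem y hy g)
  · simpa using (pCore p G).one_mem
  · intro a b ha hb
    have h : g * (a * b) * g⁻¹ = (g * a * g⁻¹) * (g * b * g⁻¹) := by group
    rw [h]; exact (pCore p G).mul_mem ha hb

/-- The Fitting subgroup `F(G)`: the join of all normal nilpotent subgroups of `G`
(i.e. the largest normal nilpotent subgroup of a finite group `G`). -/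
def fitting (G : Type*) [Group G] : Subgroup G :=
  ⨆ N : {N : Subgroup G // N.Normal ∧ Group.IsNilpotent N}, (N : Subgroup G)

instance fitting_normal (G : Type*) [Group G] : (fitting G).Normal := by
  constructor
  intro x hx g
  refine Subgroup.iSup_induction (C := fun y => g * y * g⁻¹ ∈ fitting G) _ hx ?_ ?_ ?_
  · rintro ⟨N, hN, hNn⟩ y hy
    exact Subgroup.mem_iSup_of_mem ⟨N, hN, hNn⟩ (hN.conj_mem y hy g)
  · simpa using (fitting G).one_mem
  · intro a b ha hb
    have h : g * (a * b) * g⁻¹ = (g * a * g⁻¹) * (g * b * g⁻¹) := by group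
    rw [h]; exact (fitting G).mul_mem ha hb

end Paper

section Aux

open MulAction Paper SimpleGraph

variable {A G : Type*} [Group A] [Group G] [MulDistribMulAction A G]

lemma Aux.orderOf_eq_of_mk_eq {x y : G}
    (h : Quotient.mk (orbitRel A G) x = Quotient.mk (orbitRel A G) y) :
    orderOf x = orderOf y := by
  obtain ⟨a, ha⟩ := MulAction.orbitRel_apply.mp (Quotient.exact h)
  have he : orderOf ((MulDistribMulAction.toMulEquiv G a) y) = orderOf y :=
    orderOf_injective (MulDistribMulAction.toMulEquiv G a).toMonoidHom
      (MulDistribMulAction.toMulEquiv G a).injective y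
  rw [← ha, ← he]
  rfl

lemma Aux.rep_ne_one {v : Vertex A G} {x : G}
    (hx : Quotient.mk (orbitRel A G) x = v.1) : x ≠ 1 := by
  intro h; exact v.2 (by rw [← hx, h])

lemma Aux.exists_rep (v : Vertex A G) :
    ∃ x : G, x ≠ 1 ∧ Quotient.mk (orbitRel A G) x = v.1 := by
  obtain ⟨x, hx⟩ := Quotient.exists_rep v.1
  exact ⟨x, Aux.rep_ne_one hx, hx⟩

lemma Aux.walk_closed {V : Type*} {Γ : SimpleGraph V} (S : Set V)
    (hS : ∀ u v, u ∈ S → Γ.Adj u v → v ∈ S) {u v : V} (w : Γ.Walk u v)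
    (hu : u ∈ S) : v ∈ S := by
  induction w with
  | nil => exact hu
  | cons h _ ih => exact ih (hS _ _ hu h)

lemma Aux.three_neighbors {V : Type*} {Γ : SimpleGraph V} [Finite V] {v a b c : V}
    (hab : a ≠ b) (hac : a ≠ c) (hbc : b ≠ c)
    (ha : Γ.Adj v a) (hb : Γ.Adj v b) (hc : Γ.Adj v c) :
    3 ≤ (Γ.neighborSet v).ncard := by
  have hsub : ({a, b, c} : Set V) ⊆ Γ.neighborSet v := by
    intro x hx
    rcases hx with h | h | h <;> subst h <;> assumption
  have h3 : ({a, b, c} : Set V).ncard = 3 := by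
    rw [Set.ncard_insert_of_notMem (by simp [hab, hac]) (Set.toFinite _),
      Set.ncard_pair hbc]
  rw [← h3]
  exact Set.ncard_le_ncard hsub (Set.toFinite _)

lemma Aux.card_le_three_of_eq {V : Type*} {u v w : V}
    (h : ∀ x : V, x = u ∨ x = v ∨ x = w) : Nat.card V ≤ 3 := by
  have huniv : (Set.univ : Set V) = {u, v, w} := by
    ext x; simpa using h x
  have h1 : ({u, v, w} : Set V).ncard ≤ ({v, w} : Set V).ncard + 1 :=
    Set.ncard_insert_le _ _
  have h2 : ({v, w} : Set V).ncard ≤ ({w} : Set V).ncard + 1 :=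
    Set.ncard_insert_le _ _
  have h3 : ({w} : Set V).ncard = 1 := Set.ncard_singleton _
  have h4 : Nat.card V = ({u, v, w} : Set V).ncard := by
    rw [← huniv, Set.ncard_univ]
  omega

lemma Aux.exists_fourth {V : Type*} [Finite V] (h4 : 4 ≤ Nat.card V) (u v w : V) :
    ∃ d : V, d ≠ u ∧ d ≠ v ∧ d ≠ w := by
  by_contra h
  push_neg at h
  have := Aux.card_le_three_of_eq (u := u) (v := v) (w := w) (fun x => by
    by_cases h1 : x = u
    · exact Or.inl h1
    · by_cases h2 : x = v
      · exact Or.inr (Or.inl h2)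
      · exact Or.inr (Or.inr (h x h1 h2)))
  omega

lemma Aux.exists_three {V : Type*} [Finite V] (v : V) (h : 4 ≤ Nat.card V) :
    ∃ a b c : V, a ≠ v ∧ b ≠ v ∧ c ≠ v ∧ a ≠ b ∧ a ≠ c ∧ b ≠ c := by
  obtain ⟨a, hav, -, -⟩ := Aux.exists_fourth h v v v
  obtain ⟨b, hbv, hba, -⟩ := Aux.exists_fourth h v a a
  obtain ⟨c, hcv, hca, hcb⟩ := Aux.exists_fourth h v a b
  exact ⟨a, b, c, hav, hbv, hcv, hba.symm, hca.symm, hcb.symm⟩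

lemma Aux.finite_vertex [Finite G] : Finite (Vertex A G) := by
  haveI : Finite (Quotient (orbitRel A G)) := Quotient.finite _
  exact Subtype.finite

end Aux

section Aux2

open MulAction Paper SimpleGraph

variable {A G : Type*} [Group A] [Group G] [MulDistribMulAction A G]

lemma Aux.card_vertex_le_three [Finite G]
    (hconn : (commGraph A G).Connected)
    (hdeg : ∀ v : Vertex A G, ((commGraph A G).neighborSet v).ncard ≤ 2) :
    Nat.card (Vertex A G) ≤ 3 := by
  classical
  haveI : Finite (Vertex A G) := Aux.finite_vertex
  by_contra hgt
  push_neg at hgt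
  have h4 : 4 ≤ Nat.card (Vertex A G) := hgt
  have adjhelp : ∀ (x y : G) (hx : x ≠ 1) (hy : y ≠ 1), Commute x y →
      vert A G x hx = vert A G y hy ∨
        (commGraph A G).Adj (vert A G x hx) (vert A G y hy) := by
    intro x y hx hy hc
    by_cases h : vert A G x hx = vert A G y hy
    · exact Or.inl h
    · exact Or.inr ⟨h, x, y, rfl, rfl, hc⟩
  -- no triangles
  have notri : ∀ u v w : Vertex A G, (commGraph A G).Adj u v → (commGraph A G).Adj u w →
      (commGraph A G).Adj v w → False := by
    intro u v w huv huw hvw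
    obtain ⟨d, hdu, hdv, hdw⟩ := Aux.exists_fourth h4 u v w
    have hclosed : ∀ s t : Vertex A G, s ∈ ({u, v, w} : Set (Vertex A G)) →
        (commGraph A G).Adj s t → t ∈ ({u, v, w} : Set (Vertex A G)) := by
      intro s t hs hst
      by_contra ht
      simp only [Set.mem_insert_iff, Set.mem_singleton_iff] at hs ht
      push_neg at ht
      obtain ⟨htu, htv, htw⟩ := ht
      rcases hs with h | h | h <;> subst h
      · have h3 := Aux.three_neighbors hvw.ne (Ne.symm htv) (Ne.symm htw) huv huw hst
        have := hdeg s
        omega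
      · have h3 := Aux.three_neighbors huw.ne (Ne.symm htu) (Ne.symm htw) huv.symm hvw hst
        have := hdeg s
        omega
      · have h3 := Aux.three_neighbors huv.ne (Ne.symm htu) (Ne.symm htv) huw.symm hvw.symm hst
        have := hdeg s
        omega
    obtain ⟨pw⟩ := hconn.preconnected u d
    have hd : d ∈ ({u, v, w} : Set (Vertex A G)) :=
      Aux.walk_closed _ hclosed pw (Set.mem_insert _ _)
    simp only [Set.mem_insert_iff, Set.mem_singleton_iff] at hd
    rcases hd with h | h | h
    · exact hdu h
    · exact hdv h
    · exact hdw h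
  -- every nonidentity element has prime power order
  have eppo : ∀ x : G, x ≠ 1 → IsPrimePow (orderOf x) := by
    intro x hx
    by_contra hnp
    have hm1 : orderOf x ≠ 1 := by simpa [orderOf_eq_one_iff] using hx
    have hm0 : orderOf x ≠ 0 := (orderOf_pos x).ne'
    have hpm : (orderOf x).minFac.Prime := Nat.minFac_prime hm1
    rw [isPrimePow_iff_unique_prime_dvd] at hnp
    have hnall : ¬ ∀ q : ℕ, (q.Prime ∧ q ∣ orderOf x) → q = (orderOf x).minFac :=
      fun hAll => hnp ⟨(orderOf x).minFac, ⟨hpm, (orderOf x).minFac_dvd⟩, hAll⟩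
    push_neg at hnall
    obtain ⟨q, ⟨hqP, hqm⟩, hqp⟩ := hnall
    set m := orderOf x with hm
    set p := m.minFac with hpdef
    have hpdvd : p ∣ m := m.minFac_dvd
    have hyo : orderOf (x ^ (m / p)) = p := by
      rw [orderOf_pow, ← hm, Nat.gcd_eq_right (Nat.div_dvd_of_dvd hpdvd),
        Nat.div_div_self hpdvd hm0]
    have hzo : orderOf (x ^ (m / q)) = q := by
      rw [orderOf_pow, ← hm, Nat.gcd_eq_right (Nat.div_dvd_of_dvd hqm),
        Nat.div_div_self hqm hm0]
    have hyne : x ^ (m / p) ≠ 1 := by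
      intro h
      exact hpm.one_lt.ne' (by rw [← hyo, h, orderOf_one])
    have hzne : x ^ (m / q) ≠ 1 := by
      intro h
      exact hqP.one_lt.ne' (by rw [← hzo, h, orderOf_one])
    -- distinct orders
    have hmp : m ≠ p := by
      intro h
      exact hqp ((Nat.prime_dvd_prime_iff_eq hqP hpm).mp (h ▸ hqm))
    have hmq : m ≠ q := by
      intro h
      exact hqp.symm ((Nat.prime_dvd_prime_iff_eq hpm hqP).mp (h ▸ hpdvd))
    have hpq : p ≠ q := fun h => hqp h.symm
    -- distinct vertices
    have hv1 : vert A G x hx ≠ vert A G (x ^ (m / p)) hyne := by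
      intro h
      have := Aux.orderOf_eq_of_mk_eq (congrArg Subtype.val h)
      rw [hyo] at this
      exact hmp this
    have hv2 : vert A G x hx ≠ vert A G (x ^ (m / q)) hzne := by
      intro h
      have := Aux.orderOf_eq_of_mk_eq (congrArg Subtype.val h)
      rw [hzo] at this
      exact hmq this
    have hv3 : vert A G (x ^ (m / p)) hyne ≠ vert A G (x ^ (m / q)) hzne := by
      intro h
      have := Aux.orderOf_eq_of_mk_eq (congrArg Subtype.val h)
      rw [hyo, hzo] at this
      exact hpq this
    have hadj1 := (adjhelp x (x ^ (m / p)) hx hyne ((Commute.refl x).pow_right _)).resolve_left hv1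
    have hadj2 := (adjhelp x (x ^ (m / q)) hx hzne ((Commute.refl x).pow_right _)).resolve_left hv2
    have hadj3 := (adjhelp (x ^ (m / p)) (x ^ (m / q)) hyne hzne
      (Commute.pow_pow_self x _ _)).resolve_left hv3
    exact notri _ _ _ hadj1 hadj2 hadj3
  -- a base point
  obtain ⟨v0⟩ : Nonempty (Vertex A G) := hconn.nonempty
  obtain ⟨x0, hx0, hmk0⟩ := Aux.exists_rep v0
  obtain ⟨p, k, hpP, hk, hpk⟩ := eppo x0 hx0
  have hp : p.Prime := hpP.nat_prime
  -- commuting step preserves divisibility by p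
  have step : ∀ x y : G, x ≠ 1 → y ≠ 1 → Commute x y → p ∣ orderOf x → p ∣ orderOf y := by
    intro x y hx hy hc hdvd
    obtain ⟨r, l, hrP, hl, hrl⟩ := eppo x hx
    obtain ⟨q, j, hqP, hj, hqj⟩ := eppo y hy
    have hpr : p = r := by
      have : p ∣ r ^ l := by rw [hrl]; exact hdvd
      exact (Nat.prime_dvd_prime_iff_eq hp hrP.nat_prime).mp (hp.prime.dvd_of_dvd_pow this)
    by_cases hpq : p = q
    · rw [← hqj]
      exact hpq ▸ dvd_pow_self q hj.ne'
    · exfalso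
      have hco : Nat.Coprime (orderOf x) (orderOf y) := by
        rw [← hrl, ← hqj]
        exact Nat.Coprime.pow _ _ ((Nat.coprime_primes hrP.nat_prime hqP.nat_prime).mpr
          (fun h => hpq (hpr.trans h)))
      have hmul : orderOf (x * y) = orderOf x * orderOf y :=
        hc.orderOf_mul_eq_mul_orderOf_of_coprime hco
      have hxy1 : x * y ≠ 1 := by
        intro h
        have h1 := hmul
        rw [h, orderOf_one] at h1
        have hx1 : orderOf x ≠ 1 := by simpa [orderOf_eq_one_iff] using hx
        exact hx1 (Nat.dvd_one.mp ⟨orderOf y, h1⟩)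
      obtain ⟨s, ⟨hsP, hsd⟩, huniq⟩ := isPrimePow_iff_unique_prime_dvd.mp (eppo _ hxy1)
      have h1 : p = s := huniq p ⟨hp, by rw [hmul]; exact hdvd.mul_right _⟩
      have h2 : q = s := huniq q ⟨hqP.nat_prime, by
        rw [hmul]
        exact Dvd.dvd.mul_left (by rw [← hqj]; exact dvd_pow_self q hj.ne') _⟩
      exact hpq (h1.trans h2.symm)
  -- divisibility propagates along walks
  have walk_dvd : ∀ (u v : Vertex A G) (w : (commGraph A G).Walk u v) (x : G),
      Quotient.mk (orbitRel A G) x = u.1 → p ∣ orderOf x →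
      ∀ y : G, Quotient.mk (orbitRel A G) y = v.1 → p ∣ orderOf y := by
    intro u v w
    induction w with
    | nil =>
      intro x hx hdvd y hy
      have : orderOf x = orderOf y := Aux.orderOf_eq_of_mk_eq (hx.trans hy.symm)
      rwa [this] at hdvd
    | cons h _ ih =>
      intro x hx hdvd y hy
      obtain ⟨hne, x', y', hx', hy', hc⟩ := h
      have hx'1 : x' ≠ 1 := Aux.rep_ne_one hx'
      have hy'1 : y' ≠ 1 := Aux.rep_ne_one hy'
      have hdx' : p ∣ orderOf x' := by
        rw [Aux.orderOf_eq_of_mk_eq (hx'.trans hx.symm)]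
        exact hdvd
      exact ih y' hy' (step x' y' hx'1 hy'1 hc hdx') y hy
  -- G is a p-group
  have hpg : IsPGroup p G := by
    intro g
    by_cases hg : g = 1
    · exact ⟨0, by simp [hg]⟩
    · obtain ⟨q, j, hqP, hj, hqj⟩ := eppo g hg
      have hdvd : p ∣ orderOf g := by
        obtain ⟨w⟩ := hconn.preconnected (vert A G x0 hx0) (vert A G g hg)
        refine walk_dvd _ _ w x0 ?_ ?_ g rfl
        · rfl
        · rw [← hpk]
          exact dvd_pow_self p hk.ne'
      have hqp : q = p := by
        have : p ∣ q ^ j := by rw [hqj]; exact hdvd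
        exact ((Nat.prime_dvd_prime_iff_eq hp hqP.nat_prime).mp
          (hp.prime.dvd_of_dvd_pow this)).symm
      refine ⟨j, ?_⟩
      have : p ^ j = orderOf g := by rw [← hqj, hqp]
      rw [this]
      exact pow_orderOf_eq_one g
  -- nontrivial center gives a vertex of degree ≥ 3
  haveI : Fact p.Prime := ⟨hp⟩
  haveI : Nontrivial G := ⟨x0, 1, hx0⟩
  haveI := hpg.center_nontrivial
  obtain ⟨z, hz⟩ := exists_ne (1 : Subgroup.center G)
  have hzG : (z : G) ≠ 1 := fun h => hz (Subtype.ext h)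
  set vz := vert A G (z : G) hzG with hvz
  obtain ⟨a, b, c, hav, hbv, hcv, hab', hac', hbc'⟩ := Aux.exists_three vz h4
  have hadj : ∀ w : Vertex A G, w ≠ vz → (commGraph A G).Adj vz w := by
    intro w hw
    obtain ⟨y, hy1, hy⟩ := Aux.exists_rep w
    refine ⟨Ne.symm hw, (z : G), y, rfl, hy, ?_⟩
    exact (show Commute y (z : G) from Subgroup.mem_center_iff.mp z.2 y).symm
  have h3le := Aux.three_neighbors hab' hac' hbc' (hadj a hav) (hadj b hbv) (hadj c hcv)
  have := hdeg vz
  omega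

end Aux2

section Aux3

open SimpleGraph

lemma Aux.iso_path1 {V : Type*} {Γ : SimpleGraph V} [Nonempty V] [Subsingleton V] :
    Nonempty (Γ ≃g SimpleGraph.pathGraph 1) := by
  classical
  refine ⟨⟨equivOfSubsingletonOfSubsingleton (fun _ => 0)
    (fun _ => Classical.arbitrary V), ?_⟩⟩
  intro x y
  constructor
  · intro h
    rw [SimpleGraph.pathGraph_adj] at h
    omega
  · intro h
    exact absurd (Subsingleton.elim x y) h.ne

lemma Aux.iso_path2 {V : Type*} {Γ : SimpleGraph V} {a b : V} (hab : a ≠ b)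
    (cover : ∀ x : V, x = a ∨ x = b) (hadj : Γ.Adj a b) :
    Nonempty (Γ ≃g SimpleGraph.pathGraph 2) := by
  classical
  refine ⟨⟨⟨fun x => if x = a then 0 else 1, fun i => if i = 0 then a else b, ?_, ?_⟩, ?_⟩⟩
  · intro x
    rcases cover x with h | h <;> subst h
    · simp
    · simp [Ne.symm hab]
  · intro i
    fin_cases i
    · simp
    · simp [Ne.symm hab]
  · intro x y
    simp only [Equiv.coe_fn_mk]
    rw [SimpleGraph.pathGraph_adj]
    rcases cover x with h | h <;> rcases cover y with h' | h' <;> subst h <;> subst h' <;>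
      simp [Ne.symm hab, hadj, hadj.symm]

lemma Aux.iso_path3 {V : Type*} {Γ : SimpleGraph V} {a b c : V}
    (hab : a ≠ b) (hac : a ≠ c) (hbc : b ≠ c) (cover : ∀ x : V, x = a ∨ x = b ∨ x = c)
    (h1 : Γ.Adj a b) (h2 : Γ.Adj b c) (h3 : ¬ Γ.Adj a c) :
    Nonempty (Γ ≃g SimpleGraph.pathGraph 3) := by
  classical
  have h3' : ¬ Γ.Adj c a := fun h => h3 h.symm
  refine ⟨⟨⟨fun x => if x = a then 0 else if x = b then 1 else 2,
    fun i => if i = 0 then a else if i = 1 then b else c, ?_, ?_⟩, ?_⟩⟩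
  · intro x
    rcases cover x with h | h | h <;> subst h
    · simp
    · simp [Ne.symm hab]
    · simp [Ne.symm hac, Ne.symm hbc]
  · intro i
    fin_cases i
    · simp
    · simp [Ne.symm hab]
    · simp [Ne.symm hac, Ne.symm hbc]
  · intro x y
    simp only [Equiv.coe_fn_mk]
    rw [SimpleGraph.pathGraph_adj]
    rcases cover x with h | h | h <;> rcases cover y with h' | h' | h' <;> subst h <;> subst h' <;>
      simp [Ne.symm hab, Ne.symm hac, Ne.symm hbc, h1, h2, h1.symm, h2.symm, h3, h3']

lemma Aux.iso_cycle3 {V : Type*} {Γ : SimpleGraph V} {a b c : V}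
    (hab : a ≠ b) (hac : a ≠ c) (hbc : b ≠ c) (cover : ∀ x : V, x = a ∨ x = b ∨ x = c)
    (h1 : Γ.Adj a b) (h2 : Γ.Adj a c) (h3 : Γ.Adj b c) :
    Nonempty (Γ ≃g SimpleGraph.cycleGraph 3) := by
  classical
  have key : ∀ x y : V, x ≠ y → Γ.Adj x y := by
    intro x y hxy
    rcases cover x with h | h | h <;> rcases cover y with h' | h' | h' <;> subst h <;> subst h' <;>
      first
        | exact absurd rfl hxy
        | exact h1 | exact h1.symm | exact h2 | exact h2.symm | exact h3 | exact h3.symm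
  refine ⟨⟨⟨fun x => if x = a then 0 else if x = b then 1 else 2,
    fun i => if i = 0 then a else if i = 1 then b else c, ?_, ?_⟩, ?_⟩⟩
  · intro x
    rcases cover x with h | h | h <;> subst h
    · simp
    · simp [Ne.symm hab]
    · simp [Ne.symm hac, Ne.symm hbc]
  · intro i
    fin_cases i
    · simp
    · simp [Ne.symm hab]
    · simp [Ne.symm hac, Ne.symm hbc]
  · intro x y
    rw [SimpleGraph.cycleGraph_three_eq_top, SimpleGraph.top_adj]
    constructor
    · intro h
      exact key x y (fun he => h (by rw [he]))
    · intro h he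
      exact h.ne (Equiv.injective _ he)

end Aux3

open Paper MulAction in
/-- If `Γ(G,A)` is an `F`-graph with no singular vertex (every vertex has
degree at most 2), then `Γ(G,A)` is isomorphic to a path graph `P_n` with `n ≤ 3`
or to the cycle `C_3`. -/
theorem statement0 (G A : Type*) [Group G] [Finite G] [Group A] [Finite A]
    [MulDistribMulAction A G]
    (hF : IsFGraph (commGraph A G))
    (hnosing : ∀ v : Vertex A G, ((commGraph A G).neighborSet v).ncard ≤ 2) :
    (∃ n : ℕ, n ≤ 3 ∧ Nonempty (commGraph A G ≃g SimpleGraph.pathGraph n)) ∨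
      Nonempty (commGraph A G ≃g SimpleGraph.cycleGraph 3) := by
  classical
  haveI : Finite (Vertex A G) := Aux.finite_vertex
  haveI := Fintype.ofFinite (Vertex A G)
  have hconn := hF.1
  haveI : Nonempty (Vertex A G) := hconn.nonempty
  have hcard := Aux.card_vertex_le_three hconn hnosing
  have hpos : 0 < Nat.card (Vertex A G) := Nat.card_pos
  have h123 : Nat.card (Vertex A G) = 1 ∨ Nat.card (Vertex A G) = 2 ∨
      Nat.card (Vertex A G) = 3 := by omega
  rcases h123 with h | h | h
  · haveI : Subsingleton (Vertex A G) := (Nat.card_eq_one_iff_unique.mp h).1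
    exact Or.inl ⟨1, by norm_num, Aux.iso_path1⟩
  · have hfc : (Finset.univ : Finset (Vertex A G)).card = 2 := by
      have hh := Nat.card_eq_fintype_card (α := Vertex A G)
      rw [← Finset.card_univ] at hh
      omega
    obtain ⟨a, b, hab, huniv⟩ := Finset.card_eq_two.mp hfc
    have cover : ∀ x : Vertex A G, x = a ∨ x = b := fun x => by
      have hx : x ∈ (Finset.univ : Finset (Vertex A G)) := Finset.mem_univ x
      rw [huniv] at hx
      simpa using hx
    have hadj : (commGraph A G).Adj a b := by
      obtain ⟨w⟩ := hconn.preconnected a b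
      cases w with
      | nil => exact absurd rfl hab
      | @cons _ v _ h' p =>
        rcases cover v with h'' | h''
        · subst h''; exact absurd rfl h'.ne
        · subst h''; exact h'
    exact Or.inl ⟨2, by norm_num, Aux.iso_path2 hab cover hadj⟩
  · have hfc : (Finset.univ : Finset (Vertex A G)).card = 3 := by
      have hh := Nat.card_eq_fintype_card (α := Vertex A G)
      rw [← Finset.card_univ] at hh
      omega
    obtain ⟨a, b, c, hab, hac, hbc, huniv⟩ := Finset.card_eq_three.mp hfc
    have cover : ∀ x : Vertex A G, x = a ∨ x = b ∨ x = c := fun x => by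
      have hx : x ∈ (Finset.univ : Finset (Vertex A G)) := Finset.mem_univ x
      rw [huniv] at hx
      simpa using hx
    by_cases h1 : (commGraph A G).Adj a b <;> by_cases h2 : (commGraph A G).Adj a c <;>
      by_cases h3 : (commGraph A G).Adj b c
    · exact Or.inr (Aux.iso_cycle3 hab hac hbc cover h1 h2 h3)
    · -- ab, ac, ¬bc : path with center a
      refine Or.inl ⟨3, le_refl 3, Aux.iso_path3 (Ne.symm hab) hbc hac ?_ h1.symm h2 h3⟩
      intro x
      rcases cover x with hh | hh | hh
      exacts [Or.inr (Or.inl hh), Or.inl hh, Or.inr (Or.inr hh)]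
    · -- ab, ¬ac, bc : path with center b
      exact Or.inl ⟨3, le_refl 3, Aux.iso_path3 hab hac hbc cover h1 h3 h2⟩
    · -- ab only : disconnected
      exfalso
      have hclosed : ∀ u v : Vertex A G, u ∈ ({a, b} : Set (Vertex A G)) →
          (commGraph A G).Adj u v → v ∈ ({a, b} : Set (Vertex A G)) := by
        intro u v hu huv
        rcases cover v with hh | hh | hh
        · exact hh ▸ Set.mem_insert _ _
        · exact hh ▸ Set.mem_insert_of_mem _ rfl
        · subst hh
          rcases hu with hu | hu
          · exact absurd (hu ▸ huv) h2
          · exact absurd ((Set.mem_singleton_iff.mp hu) ▸ huv) h3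
      obtain ⟨w⟩ := hconn.preconnected a c
      have hc' := Aux.walk_closed _ hclosed w (Set.mem_insert _ _)
      rcases hc' with hh | hh
      · exact hac (Set.mem_singleton_iff.mp hh).symm
      · exact hbc (Set.mem_singleton_iff.mp hh).symm
    · -- ¬ab, ac, bc : path with center c
      refine Or.inl ⟨3, le_refl 3, Aux.iso_path3 hac hab (Ne.symm hbc) ?_ h2 h3.symm h1⟩
      intro x
      rcases cover x with hh | hh | hh
      exacts [Or.inl hh, Or.inr (Or.inr hh), Or.inr (Or.inl hh)]
    · -- ac only : disconnected
      exfalso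
      have hclosed : ∀ u v : Vertex A G, u ∈ ({a, c} : Set (Vertex A G)) →
          (commGraph A G).Adj u v → v ∈ ({a, c} : Set (Vertex A G)) := by
        intro u v hu huv
        rcases cover v with hh | hh | hh
        · exact hh ▸ Set.mem_insert _ _
        · subst hh
          rcases hu with hu | hu
          · exact absurd (hu ▸ huv) h1
          · exact absurd ((Set.mem_singleton_iff.mp hu) ▸ huv).symm h3
        · exact hh ▸ Set.mem_insert_of_mem _ rfl
      obtain ⟨w⟩ := hconn.preconnected a b
      have hb' := Aux.walk_closed _ hclosed w (Set.mem_insert _ _)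
      rcases hb' with hh | hh
      · exact hab (Set.mem_singleton_iff.mp hh).symm
      · exact hbc (Set.mem_singleton_iff.mp hh)
    · -- bc only : a isolated
      exfalso
      have hclosed : ∀ u v : Vertex A G, u ∈ ({a} : Set (Vertex A G)) →
          (commGraph A G).Adj u v → v ∈ ({a} : Set (Vertex A G)) := by
        intro u v hu huv
        simp only [Set.mem_singleton_iff] at hu ⊢
        subst hu
        rcases cover v with hh | hh | hh
        · exact hh
        · exact absurd (hh ▸ huv) h1
        · exact absurd (hh ▸ huv) h2
      obtain ⟨w⟩ := hconn.preconnected a b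
      have hb' := Aux.walk_closed _ hclosed w rfl
      exact hab (Set.mem_singleton_iff.mp hb').symm
    · -- no edges : a isolated
      exfalso
      have hclosed : ∀ u v : Vertex A G, u ∈ ({a} : Set (Vertex A G)) →
          (commGraph A G).Adj u v → v ∈ ({a} : Set (Vertex A G)) := by
        intro u v hu huv
        simp only [Set.mem_singleton_iff] at hu ⊢
        subst hu
        rcases cover v with hh | hh | hh
        · exact hh
        · exact absurd (hh ▸ huv) h1
        · exact absurd (hh ▸ huv) h2
      obtain ⟨w⟩ := hconn.preconnected a b
      have hb' := Aux.walk_closed _ hclosed w rfl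
      exact hab (Set.mem_singleton_iff.mp hb').symm
end

section
/- If x^A and y^A are adjacent vertices of Γ(G,A) with gcd(|x|,|y|) = 1, then x and y both have prime order and z^A ∈ {x^A, y^A}. In particular, for any nontrivial q-element u of G with q a prime different from p, the centralizer C_G(u) is a {p,q}-group; and for any nontrivial p-element v of G with v^A ≠ z^A, the centralizer C_G(v) is a p-group. -/
open MulAction

namespace Paper

variable (A G : Type*) [Group A] [Group G] [MulDistribMulAction A G]

section Lemmas

variable {A G}

theorem mkq_smul (a : A) (x : G) :
    Quotient.mk (orbitRel A G) (a • x) = Quotient.mk (orbitRel A G) x :=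
  Quotient.sound (MulAction.orbitRel_apply.mpr (mem_orbit x a))

theorem orderOf_smul (a : A) (x : G) : orderOf (a • x) = orderOf x :=
  orderOf_injective (MulDistribMulAction.toMulEquiv G a).toMonoidHom (MulEquiv.injective _) x

theorem orderOf_eq_of_mkq {x y : G}
    (h : Quotient.mk (orbitRel A G) x = Quotient.mk (orbitRel A G) y) :
    orderOf x = orderOf y := by
  obtain ⟨a, rfl⟩ := mem_orbit_iff.mp (MulAction.orbitRel_apply.mp (Quotient.exact h))
  exact orderOf_smul a y

theorem mkq_eq_iff_orbit {x y : G} :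
    Quotient.mk (orbitRel A G) x = Quotient.mk (orbitRel A G) y ↔ orbit A x = orbit A y := by
  constructor
  · intro h
    exact MulAction.orbit_eq_iff.mpr (MulAction.orbitRel_apply.mp (Quotient.exact h))
  · intro h
    exact Quotient.sound (MulAction.orbitRel_apply.mpr (MulAction.orbit_eq_iff.mp h))

theorem vert_ne_of_orderOf_ne {x y : G} (hx : x ≠ 1) (hy : y ≠ 1)
    (h : orderOf x ≠ orderOf y) : vert A G x hx ≠ vert A G y hy := by
  intro he
  exact h (orderOf_eq_of_mkq (congrArg Subtype.val he))

theorem adj_of_commute {x y : G} (hx : x ≠ 1) (hy : y ≠ 1) (hc : Commute x y)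
    (h : orderOf x ≠ orderOf y) :
    (commGraph A G).Adj (vert A G x hx) (vert A G y hy) :=
  ⟨vert_ne_of_orderOf_ne hx hy h, x, y, rfl, rfl, hc⟩

theorem three_le_deg [Finite G] {u a b c : Vertex A G}
    (ha : (commGraph A G).Adj u a) (hb : (commGraph A G).Adj u b)
    (hc : (commGraph A G).Adj u c)
    (hab : a ≠ b) (hac : a ≠ c) (hbc : b ≠ c) :
    3 ≤ ((commGraph A G).neighborSet u).ncard := by
  haveI : Finite (Vertex A G) := Subtype.finite
  have hsub : ({a, b, c} : Set (Vertex A G)) ⊆ (commGraph A G).neighborSet u := by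
    intro v hv
    simp only [Set.mem_insert_iff, Set.mem_singleton_iff] at hv
    rcases hv with rfl | rfl | rfl
    · exact ha
    · exact hb
    · exact hc
  have h3 : ({a, b, c} : Set (Vertex A G)).ncard = 3 := by
    rw [Set.ncard_insert_of_notMem (by simp [hab, hac]), Set.ncard_pair hbc]
  calc (3 : ℕ) = ({a, b, c} : Set (Vertex A G)).ncard := h3.symm
    _ ≤ _ := Set.ncard_le_ncard hsub (Set.toFinite _)

theorem mem_of_walk {V : Type*} {Γ : SimpleGraph V} {S : Set V}
    (hS : ∀ u ∈ S, ∀ v, Γ.Adj u v → v ∈ S) :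
    ∀ {u v : V}, Γ.Walk u v → u ∈ S → v ∈ S
  | _, _, SimpleGraph.Walk.nil, hu => hu
  | _, _, SimpleGraph.Walk.cons h w, hu => mem_of_walk hS w (hS _ hu _ h)

end Lemmas

section Main

variable {A G : Type*} [Group A] [Group G] [Finite G] [MulDistribMulAction A G]

theorem step_prime
    (hF : IsFGraph (commGraph A G))
    {x y : G} (hx : x ≠ 1) (hy : y ≠ 1) (hc : Commute x y)
    (hcop : Nat.Coprime (orderOf x) (orderOf y)) : (orderOf x).Prime := by
  by_contra hnp
  have hox0 : orderOf x ≠ 0 := (orderOf_pos x).ne'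
  have hox1 : orderOf x ≠ 1 := by simpa [orderOf_eq_one_iff] using hx
  have hoy1 : orderOf y ≠ 1 := by simpa [orderOf_eq_one_iff] using hy
  have hoy0 : orderOf y ≠ 0 := (orderOf_pos y).ne'
  have h2a : 2 ≤ orderOf x := by omega
  have h2b : 2 ≤ orderOf y := by omega
  obtain ⟨r, hr, hrd⟩ := Nat.exists_prime_and_dvd hox1
  have hrle : r ≤ orderOf x := Nat.le_of_dvd (by omega) hrd
  have hr2 : 2 ≤ r := hr.two_le
  set x1 := x ^ (orderOf x / r) with hx1def
  have hx1o : orderOf x1 = r := orderOf_pow_orderOf_div hox0 hrd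
  have hx11 : x1 ≠ 1 := by
    intro h
    rw [h, orderOf_one] at hx1o
    omega
  have hwo : orderOf (x * y) = orderOf x * orderOf y :=
    Commute.orderOf_mul_eq_mul_orderOf_of_coprime hc hcop
  have hw1 : x * y ≠ 1 := by
    intro h
    rw [h, orderOf_one] at hwo
    have := Nat.eq_one_of_mul_eq_one_right hwo.symm
    omega
  have hww : orderOf x * orderOf y > orderOf x := by nlinarith
  have hab : orderOf x ≠ orderOf y := by
    intro h
    rw [h] at hcop
    exact hoy1 ((Nat.coprime_self _).mp hcop)
  have haw : orderOf x ≠ orderOf (x * y) := by rw [hwo]; omega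
  have har : orderOf x ≠ r := fun h => hnp (h ▸ hr)
  have hbw : orderOf y ≠ orderOf (x * y) := by rw [hwo]; nlinarith
  have hbr : orderOf y ≠ r := by
    intro h
    have hd : r ∣ Nat.gcd (orderOf x) (orderOf y) := Nat.dvd_gcd hrd (h ▸ dvd_rfl)
    rw [Nat.Coprime.gcd_eq_one hcop] at hd
    have := Nat.eq_one_of_dvd_one hd
    omega
  have hwr : orderOf (x * y) ≠ r := by rw [hwo]; omega
  -- commuting relations
  have hc_x1_x : Commute x1 x := (Commute.refl x).pow_left _
  have hc_x1_y : Commute x1 y := hc.pow_left _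
  have hc_x1_w : Commute x1 (x * y) := hc_x1_x.mul_right hc_x1_y
  have hc_x_w : Commute x (x * y) := (Commute.refl x).mul_right hc
  have hc_y_w : Commute y (x * y) := hc.symm.mul_right (Commute.refl y)
  -- vertex distinctness
  have hyw : vert A G y hy ≠ vert A G (x*y) hw1 := vert_ne_of_orderOf_ne hy hw1 hbw
  have hxw : vert A G x hx ≠ vert A G (x*y) hw1 := vert_ne_of_orderOf_ne hx hw1 haw
  have hxy : vert A G x hx ≠ vert A G y hy := vert_ne_of_orderOf_ne hx hy hab
  have hyv1 : vert A G y hy ≠ vert A G x1 hx11 :=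
    vert_ne_of_orderOf_ne hy hx11 (by rw [hx1o]; exact hbr)
  have hwv1 : vert A G (x*y) hw1 ≠ vert A G x1 hx11 :=
    vert_ne_of_orderOf_ne hw1 hx11 (by rw [hx1o]; exact hwr)
  have dvx : 3 ≤ ((commGraph A G).neighborSet (vert A G x hx)).ncard :=
    three_le_deg (adj_of_commute hx hy hc hab) (adj_of_commute hx hw1 hc_x_w haw)
      (adj_of_commute hx hx11 hc_x1_x.symm (by rw [hx1o]; exact har))
      hyw hyv1 hwv1
  have hxv1 : vert A G x hx ≠ vert A G x1 hx11 :=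
    vert_ne_of_orderOf_ne hx hx11 (by rw [hx1o]; exact har)
  have dvy : 3 ≤ ((commGraph A G).neighborSet (vert A G y hy)).ncard :=
    three_le_deg (adj_of_commute hy hx hc.symm hab.symm) (adj_of_commute hy hw1 hc_y_w hbw)
      (adj_of_commute hy hx11 hc_x1_y.symm (by rw [hx1o]; exact hbr))
      hxw hxv1 hwv1
  exact hxy (hF.2 _ _ dvx dvy)

end Main

section Main2

variable {A G : Type*} [Group A] [Group G] [Finite G] [MulDistribMulAction A G]

theorem claim1 (hF : IsFGraph (commGraph A G)) {z : G} (hz1 : z ≠ 1)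
    (hsing : 3 ≤ ((commGraph A G).neighborSet (vert A G z hz1)).ncard)
    {x y : G} (hx : x ≠ 1) (hy : y ≠ 1) (hc : Commute x y)
    (hcop : Nat.Coprime (orderOf x) (orderOf y)) :
    (orderOf x).Prime ∧ (orderOf y).Prime ∧
      (Quotient.mk (orbitRel A G) z = Quotient.mk (orbitRel A G) x ∨
       Quotient.mk (orbitRel A G) z = Quotient.mk (orbitRel A G) y) := by
  have hpx : (orderOf x).Prime := step_prime hF hx hy hc hcop
  have hpy : (orderOf y).Prime := step_prime hF hy hx hc.symm hcop.symm
  refine ⟨hpx, hpy, ?_⟩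
  by_contra hcon
  push_neg at hcon
  obtain ⟨hzx, hzy⟩ := hcon
  have hwo : orderOf (x*y) = orderOf x * orderOf y :=
    Commute.orderOf_mul_eq_mul_orderOf_of_coprime hc hcop
  have hw1 : x*y ≠ 1 := by
    intro h; rw [h, orderOf_one] at hwo
    exact hpx.one_lt.ne' (Nat.eq_one_of_mul_eq_one_right hwo.symm)
  have hab : orderOf x ≠ orderOf y := by
    intro h; rw [h] at hcop; exact hpy.one_lt.ne' ((Nat.coprime_self _).mp hcop)
  have haw : orderOf x ≠ orderOf (x*y) := by
    rw [hwo]; nlinarith [hpx.two_le, hpy.two_le]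
  have hbw : orderOf y ≠ orderOf (x*y) := by
    rw [hwo]; nlinarith [hpx.two_le, hpy.two_le]
  set vx := vert A G x hx with hvxd
  set vy := vert A G y hy with hvyd
  set vw := vert A G (x*y) hw1 with hvwd
  set vz := vert A G z hz1 with hvzd
  have hxy : vx ≠ vy := vert_ne_of_orderOf_ne hx hy hab
  have hxw : vx ≠ vw := vert_ne_of_orderOf_ne hx hw1 haw
  have hyw : vy ≠ vw := vert_ne_of_orderOf_ne hy hw1 hbw
  have hzvx : vz ≠ vx := fun h => hzx (congrArg Subtype.val h)
  have hzvy : vz ≠ vy := fun h => hzy (congrArg Subtype.val h)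
  have hc_x_w : Commute x (x*y) := (Commute.refl x).mul_right hc
  have hc_y_w : Commute y (x*y) := hc.symm.mul_right (Commute.refl y)
  have axy : (commGraph A G).Adj vx vy := adj_of_commute hx hy hc hab
  have axw : (commGraph A G).Adj vx vw := adj_of_commute hx hw1 hc_x_w haw
  have ayw : (commGraph A G).Adj vy vw := adj_of_commute hy hw1 hc_y_w hbw
  by_cases hzw : Quotient.mk (orbitRel A G) z = Quotient.mk (orbitRel A G) (x*y)
  · -- z^A is the orbit of xy; it has a third neighbor, forcing deg(x^A) ≥ 3
    have hvzw : vz = vw := Subtype.ext hzw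
    have h3w : 3 ≤ ((commGraph A G).neighborSet vw).ncard := by rw [← hvzw]; exact hsing
    haveI : Finite (Vertex A G) := Subtype.finite
    have hnsub : ¬ ((commGraph A G).neighborSet vw ⊆ {vx, vy}) := by
      intro hsub
      have hle := Set.ncard_le_ncard hsub (Set.toFinite _)
      have h2 : ({vx, vy} : Set (Vertex A G)).ncard ≤ 2 := by
        apply le_trans (Set.ncard_insert_le _ _)
        simp
      omega
    obtain ⟨t, htmem, htne⟩ := Set.not_subset.mp hnsub
    simp only [Set.mem_insert_iff, Set.mem_singleton_iff, not_or] at htne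
    obtain ⟨htx, hty⟩ := htne
    obtain ⟨hwt, w1, t1, hw1mk, ht1mk, hcomm⟩ := htmem
    have hw1mk' : Quotient.mk (orbitRel A G) w1 = Quotient.mk (orbitRel A G) (x*y) := hw1mk
    obtain ⟨a, rfl⟩ := mem_orbit_iff.mp (MulAction.orbitRel_apply.mp (Quotient.exact hw1mk'))
    have hmul : a • (x*y) = (a • x) * (a • y) := smul_mul' a x y
    have hcxy' : Commute (a • x) (a • y) := by
      show (a • x) * (a • y) = (a • y) * (a • x)
      rw [← smul_mul', ← smul_mul', hc.eq]
    have hoy' : orderOf (a • y) = orderOf y := orderOf_smul a y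
    have hox' : orderOf (a • x) = orderOf x := orderOf_smul a x
    have hy'pow : (a • y) ^ (orderOf y) = 1 := by
      rw [← hoy']; exact pow_orderOf_eq_one (a • y)
    have hct : Commute t1 ((a • x) * (a • y)) := by rw [← hmul]; exact hcomm.symm
    have hctp : Commute t1 ((a • x) ^ (orderOf y)) := by
      have h2 := hct.pow_right (orderOf y)
      rwa [hcxy'.mul_pow, hy'pow, mul_one] at h2
    obtain ⟨e, -, he⟩ := Nat.exists_mul_mod_eq_one_of_coprime hcop.symm hpx.one_lt
    have hmod : orderOf y * e ≡ 1 [MOD orderOf x] := by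
      show (orderOf y * e) % orderOf x = 1 % orderOf x
      rw [he, Nat.mod_eq_of_lt hpx.one_lt]
    have hxpow : (a • x) ^ (orderOf y * e) = (a • x) ^ 1 := by
      apply pow_eq_pow_iff_modEq.mpr; rwa [hox']
    have hctx' : Commute t1 (a • x) := by
      have h2 := hctp.pow_right e
      rwa [← pow_mul, hxpow, pow_one] at h2
    have haxt : (commGraph A G).Adj vx t :=
      ⟨fun h => htx h.symm, a • x, t1, mkq_smul a x, ht1mk, hctx'.symm⟩
    have dvx3 : 3 ≤ ((commGraph A G).neighborSet vx).ncard :=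
      three_le_deg axy axw haxt hyw (fun h => hty h.symm) hwt
    exact hzvx (hF.2 vx vz dvx3 hsing).symm
  · -- the triangle {x^A, y^A, (xy)^A} would be a proper closed component
    have hzvw : vz ≠ vw := fun h => hzw (congrArg Subtype.val h)
    set S : Set (Vertex A G) := {vx, vy, vw} with hS
    have hclosed : ∀ u ∈ S, ∀ v, (commGraph A G).Adj u v → v ∈ S := by
      intro u hu v hadj
      by_contra hvmem
      simp only [hS, Set.mem_insert_iff, Set.mem_singleton_iff, not_or] at hvmem hu
      obtain ⟨hvx', hvy', hvw'⟩ := hvmem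
      rcases hu with rfl | rfl | rfl
      · exact hzvx (hF.2 vx vz
          (three_le_deg axy axw hadj hyw (fun h => hvy' h.symm) (fun h => hvw' h.symm))
          hsing).symm
      · exact hzvy (hF.2 vy vz
          (three_le_deg axy.symm ayw hadj hxw (fun h => hvx' h.symm) (fun h => hvw' h.symm))
          hsing).symm
      · exact hzvw (hF.2 vw vz
          (three_le_deg axw.symm ayw.symm hadj hxy (fun h => hvx' h.symm) (fun h => hvy' h.symm))
          hsing).symm
    obtain ⟨wk⟩ := hF.1.preconnected vx vz
    have hzS : vz ∈ S := mem_of_walk hclosed wk (by simp [hS])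
    simp only [hS, Set.mem_insert_iff, Set.mem_singleton_iff] at hzS
    rcases hzS with h | h | h
    · exact hzvx h
    · exact hzvy h
    · exact hzvw h

end Main2

end Paper

open Paper MulAction in
/-- If `x^A ∼ y^A` with `gcd(|x|,|y|) = 1` then `x` and `y` have prime order and
`z^A ∈ {x^A, y^A}`. In particular, for a nontrivial `q`-element `u` (`q ≠ p` prime) the
centralizer `C_G(u)` is a `{p,q}`-group, and for a nontrivial `p`-element `v` with
`v^A ≠ z^A` the centralizer `C_G(v)` is a `p`-group. -/
theorem statement3 (G A : Type*) [Group G] [Finite G] [Group A] [Finite A]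
    [MulDistribMulAction A G]
    (hπ : 2 ≤ (Nat.card G).primeFactors.card)
    (hF : IsFGraph (commGraph A G))
    (z : G) (hz1 : z ≠ 1)
    (hsing : 3 ≤ ((commGraph A G).neighborSet (vert A G z hz1)).ncard)
    (p : ℕ) (hp : p.Prime) (hpz : p ∣ orderOf z) :
    (∀ (x y : G) (hx : x ≠ 1) (hy : y ≠ 1),
      (commGraph A G).Adj (vert A G x hx) (vert A G y hy) →
      Nat.Coprime (orderOf x) (orderOf y) →
        (orderOf x).Prime ∧ (orderOf y).Prime ∧
          (orbit A z = orbit A x ∨ orbit A z = orbit A y)) ∧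
    (∀ q : ℕ, q.Prime → q ≠ p → ∀ u : G, u ≠ 1 → (∃ k : ℕ, orderOf u = q ^ k) →
      ∀ w ∈ Subgroup.centralizer {u}, (orderOf w).primeFactors ⊆ {p, q}) ∧
    (∀ v : G, v ≠ 1 → (∃ k : ℕ, orderOf v = p ^ k) → orbit A v ≠ orbit A z →
      ∀ w ∈ Subgroup.centralizer {v}, ∃ k : ℕ, orderOf w = p ^ k) := by
  refine ⟨?_, ?_, ?_⟩
  · -- Part 1
    intro x y hx hy hadj hcop
    obtain ⟨hne, x1, y1, hx1mk, hy1mk, hc⟩ := hadj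
    have hx1mk' : Quotient.mk (orbitRel A G) x1 = Quotient.mk (orbitRel A G) x := hx1mk
    have hy1mk' : Quotient.mk (orbitRel A G) y1 = Quotient.mk (orbitRel A G) y := hy1mk
    have hox : orderOf x1 = orderOf x := orderOf_eq_of_mkq hx1mk'
    have hoy : orderOf y1 = orderOf y := orderOf_eq_of_mkq hy1mk'
    have hxo1 : orderOf x ≠ 1 := by simpa [orderOf_eq_one_iff] using hx
    have hyo1 : orderOf y ≠ 1 := by simpa [orderOf_eq_one_iff] using hy
    have hx11 : x1 ≠ 1 := fun h => hxo1 (by rw [← hox, h, orderOf_one])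
    have hy11 : y1 ≠ 1 := fun h => hyo1 (by rw [← hoy, h, orderOf_one])
    obtain ⟨p1, p2, p3⟩ := claim1 hF hz1 hsing hx11 hy11 hc (by rwa [hox, hoy])
    rw [hox] at p1
    rw [hoy] at p2
    refine ⟨p1, p2, ?_⟩
    rcases p3 with h | h
    · exact Or.inl (mkq_eq_iff_orbit.mp (h.trans hx1mk'))
    · exact Or.inr (mkq_eq_iff_orbit.mp (h.trans hy1mk'))
  · -- Part 2
    intro q hq hqp u hu hupow w hw r hr
    by_contra hrpq
    simp only [Finset.mem_insert, Finset.mem_singleton, not_or] at hrpq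
    obtain ⟨hrp, hrq⟩ := hrpq
    rw [Nat.mem_primeFactors] at hr
    obtain ⟨hrprime, hrdvd, hne0⟩ := hr
    obtain ⟨k, hk⟩ := hupow
    set w1 := w ^ (orderOf w / r) with hw1def
    have how1 : orderOf w1 = r := orderOf_pow_orderOf_div (orderOf_pos w).ne' hrdvd
    have hw11 : w1 ≠ 1 := fun h => hrprime.one_lt.ne' (by rw [← how1, h, orderOf_one])
    have hcw : Commute u w := Subgroup.mem_centralizer_iff.mp hw u (Set.mem_singleton u)
    have hcw1 : Commute u w1 := hcw.pow_right _
    have hcop : Nat.Coprime (orderOf u) (orderOf w1) := by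
      rw [hk, how1]
      exact Nat.Coprime.pow_left _ ((Nat.coprime_primes hq hrprime).mpr (fun h => hrq h.symm))
    obtain ⟨-, -, h3⟩ := claim1 hF hz1 hsing hu hw11 hcw1 hcop
    rcases h3 with h | h
    · have hoz := orderOf_eq_of_mkq h
      rw [hk] at hoz
      have hpq : p ∣ q := hp.dvd_of_dvd_pow (hoz ▸ hpz)
      exact hqp ((Nat.prime_dvd_prime_iff_eq hp hq).mp hpq).symm
    · have hoz := orderOf_eq_of_mkq h
      rw [how1] at hoz
      exact hrp ((Nat.prime_dvd_prime_iff_eq hp hrprime).mp (hoz ▸ hpz)).symm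
  · -- Part 3
    intro v hv hvpow hvz w hw
    obtain ⟨k, hk⟩ := hvpow
    have hn0 : orderOf w ≠ 0 := (orderOf_pos w).ne'
    have hall : ∀ {d : ℕ}, d.Prime → d ∣ orderOf w → d = p := by
      intro r hrprime hrdvd
      by_contra hrp
      set w1 := w ^ (orderOf w / r) with hw1def
      have how1 : orderOf w1 = r := orderOf_pow_orderOf_div hn0 hrdvd
      have hw11 : w1 ≠ 1 := fun h => hrprime.one_lt.ne' (by rw [← how1, h, orderOf_one])
      have hcw : Commute v w := Subgroup.mem_centralizer_iff.mp hw v (Set.mem_singleton v)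
      have hcw1 : Commute v w1 := hcw.pow_right _
      have hcop : Nat.Coprime (orderOf v) (orderOf w1) := by
        rw [hk, how1]
        exact Nat.Coprime.pow_left _ ((Nat.coprime_primes hp hrprime).mpr (fun h => hrp h.symm))
      obtain ⟨-, -, h3⟩ := claim1 hF hz1 hsing hv hw11 hcw1 hcop
      rcases h3 with h | h
      · exact hvz (mkq_eq_iff_orbit.mp h).symm
      · have hoz := orderOf_eq_of_mkq h
        rw [how1] at hoz
        exact hrp ((Nat.prime_dvd_prime_iff_eq hp hrprime).mp (hoz ▸ hpz)).symm
    exact ⟨_, Nat.eq_prime_pow_of_unique_prime_dvd hn0 hall⟩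
end

section
/- Let H be an A-invariant subgroup of G and let q be a prime different from p. Then for every Sylow q-subgroup Q of G, either Q ≤ H or Q ∩ H = 1. In particular, gcd(|H|, [G : H]) is a power of p. -/
open MulAction

section Aux6

open MulAction Paper

variable {A G : Type*} [Group A] [Group G] [MulDistribMulAction A G]

private lemma orb_orderOf_eq {x y : G}
    (h : Quotient.mk (MulAction.orbitRel A G) x = Quotient.mk (MulAction.orbitRel A G) y) :
    orderOf x = orderOf y := by
  obtain ⟨a, ha⟩ := MulAction.mem_orbit_iff.mp (Quotient.exact h)
  rw [← ha]
  simpa using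
    orderOf_injective (MulDistribMulAction.toMonoidHom G a) (MulAction.injective a) y

private lemma orb_mem_iff (H : Subgroup G) (hH : AInv A G H) {x y : G}
    (h : Quotient.mk (MulAction.orbitRel A G) x = Quotient.mk (MulAction.orbitRel A G) y) :
    x ∈ H ↔ y ∈ H := by
  obtain ⟨a, ha⟩ := MulAction.mem_orbit_iff.mp (Quotient.exact h)
  constructor
  · intro hx
    have : a⁻¹ • x = y := by rw [← ha, inv_smul_smul]
    rw [← this]; exact hH a⁻¹ x hx
  · intro hy
    rw [← ha]; exact hH a y hy

private lemma qel_propagate [Finite G]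
    (hF : IsFGraph (commGraph A G)) (z : G) (hz1 : z ≠ 1)
    (hsing : 3 ≤ ((commGraph A G).neighborSet (vert A G z hz1)).ncard)
    {p q : ℕ} (hp : p.Prime) (hq : q.Prime) (hqp : q ≠ p) (hpz : p ∣ orderOf z)
    (d y : G) (hd1 : d ≠ 1) (hy1 : y ≠ 1)
    (hdq : ∃ a, orderOf d = q ^ a) (hyq : ∃ b, orderOf y = q ^ b)
    (hcomm : Commute d y)
    (hne : Quotient.mk (MulAction.orbitRel A G) y ≠ Quotient.mk (MulAction.orbitRel A G) d) :
    False := by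
  classical
  haveI : Finite (Vertex A G) := by unfold Vertex; infer_instance
  -- order preserved on vertices, so distinct orders give distinct vertices.
  have vne : ∀ (u v : G) (hu : u ≠ 1) (hv : v ≠ 1), orderOf u ≠ orderOf v →
      vert A G u hu ≠ vert A G v hv := by
    intro u v hu hv ho h
    exact ho (orb_orderOf_eq (congrArg Subtype.val h))
  -- KEY: centralizer elements of a suitable q-element are q-elements
  have key : ∀ x y₁ : G, x ≠ 1 → (∃ a, orderOf x = q ^ a) → y₁ ≠ 1 →
      (∃ b, orderOf y₁ = q ^ b) → Commute x y₁ →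
      Quotient.mk (MulAction.orbitRel A G) y₁ ≠ Quotient.mk (MulAction.orbitRel A G) x →
      ∀ w : G, Commute x w → ∃ c, orderOf w = q ^ c := by
    rintro x y₁ hx1 ⟨a, hxa⟩ hy11 ⟨b, hyb⟩ hxy hne1 w hxw
    by_contra hw
    have hn0 : orderOf w ≠ 0 := fun h =>
      (Nat.card_pos (α := G)).ne' (Nat.eq_zero_of_zero_dvd (h ▸ orderOf_dvd_natCard w))
    obtain ⟨e, s, hself, hcop⟩ :
        ∃ e s : ℕ, q ^ e * s = orderOf w ∧ Nat.Coprime q s :=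
      ⟨(orderOf w).factorization q, ordCompl[q] (orderOf w),
        Nat.ordProj_mul_ordCompl_eq_self _ q, Nat.coprime_ordCompl hq hn0⟩
    set w' := w ^ q ^ e with hw'def
    have how' : orderOf w' = s := by
      rw [hw'def, orderOf_pow, Nat.gcd_eq_right ⟨s, hself.symm⟩, ← hself,
        Nat.mul_div_cancel_left _ (pow_pos hq.pos e)]
    have hs0 : s ≠ 0 := fun h => hn0 (by rw [← hself, h, mul_zero])
    have hs1 : s ≠ 1 := fun h => hw ⟨e, by rw [← hself, h, mul_one]⟩
    have hw'1 : w' ≠ 1 := fun h => hs1 (by rw [← how', h, orderOf_one])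
    have hxw' : Commute x w' := hxw.pow_right _
    have hcopa : Nat.Coprime (orderOf x) (orderOf w') := by
      rw [hxa, how']; exact Nat.Coprime.pow_left a hcop
    have hoxw' : orderOf (x * w') = q ^ a * s := by
      rw [hxw'.orderOf_mul_eq_mul_orderOf_of_coprime hcopa, hxa, how']
    have ha0 : a ≠ 0 := by
      intro h
      rw [h, pow_zero] at hxa
      exact hx1 (orderOf_eq_one_iff.mp hxa)
    have hb0 : b ≠ 0 := by
      intro h
      rw [h, pow_zero] at hyb
      exact hy11 (orderOf_eq_one_iff.mp hyb)
    have hqns : ¬ q ∣ s := (Nat.Prime.coprime_iff_not_dvd hq).mp hcop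
    have hqpow : ∀ m : ℕ, m ≠ 0 → q ^ m ≠ s := by
      intro m hm h
      exact hqns (h ▸ dvd_pow_self q hm)
    have hxw'1 : x * w' ≠ 1 := by
      intro h
      rw [h, orderOf_one] at hoxw'
      exact hs1 (Nat.eq_one_of_mul_eq_one_left hoxw'.symm)
    have d12 : orderOf y₁ ≠ orderOf w' := by
      rw [hyb, how']; exact hqpow b hb0
    have d13 : orderOf y₁ ≠ orderOf (x * w') := by
      rw [hyb, hoxw']
      intro h
      have hdv : s ∣ q ^ b := ⟨q ^ a, by rw [h, mul_comm]⟩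
      exact hs1 (Nat.Coprime.eq_one_of_dvd (Nat.Coprime.pow_right b hcop.symm) hdv)
    have d23 : orderOf w' ≠ orderOf (x * w') := by
      rw [how', hoxw']
      intro h
      have h2 : q ^ a = 1 :=
        Nat.eq_of_mul_eq_mul_right (Nat.pos_of_ne_zero hs0) (h.symm.trans (one_mul s).symm)
      have h3 : q ∣ 1 := h2 ▸ dvd_pow_self q ha0
      exact hq.one_lt.ne' (Nat.dvd_one.mp h3)
    have dx2 : orderOf x ≠ orderOf w' := by
      rw [hxa, how']; exact hqpow a ha0
    have dx3 : orderOf x ≠ orderOf (x * w') := by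
      rw [hxa, hoxw']
      intro h
      exact hs1 (Nat.eq_of_mul_eq_mul_left (pow_pos hq.pos a) ((mul_one _).trans h)).symm
    set v := vert A G x hx1 with hv
    set n1 := vert A G y₁ hy11 with hn1
    set n2 := vert A G w' hw'1 with hn2
    set n3 := vert A G (x * w') hxw'1 with hn3
    have hvadj : ∀ (u : G) (hu : u ≠ 1), Commute x u → v ≠ vert A G u hu →
        (commGraph A G).Adj v (vert A G u hu) := by
      intro u hu hc hnev
      exact ⟨hnev, x, u, rfl, rfl, hc⟩
    have hvn1 : v ≠ n1 := fun h => hne1 ((congrArg Subtype.val h).symm)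
    have hvn2 : v ≠ n2 := vne _ _ _ _ dx2
    have hvn3 : v ≠ n3 := vne _ _ _ _ dx3
    have h12 : n1 ≠ n2 := vne _ _ _ _ d12
    have h13 : n1 ≠ n3 := vne _ _ _ _ d13
    have h23 : n2 ≠ n3 := vne _ _ _ _ d23
    have hsub : ({n1, n2, n3} : Set (Vertex A G)) ⊆ (commGraph A G).neighborSet v := by
      intro t ht
      rcases ht with h | h | h
      · rw [h]; exact hvadj _ _ hxy hvn1
      · rw [h]; exact hvadj _ _ hxw' hvn2
      · rw [h]; exact hvadj _ _ (Commute.mul_right (Commute.refl x) hxw') hvn3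
    have hcard3 : ({n1, n2, n3} : Set (Vertex A G)).ncard = 3 := by
      rw [Set.ncard_insert_of_notMem (by simp [h12, h13]) (Set.toFinite _),
        Set.ncard_pair h23]
    have hdeg : 3 ≤ ((commGraph A G).neighborSet v).ncard := by
      rw [← hcard3]
      exact Set.ncard_le_ncard hsub (Set.toFinite _)
    have hvz : v = vert A G z hz1 := hF.2 v (vert A G z hz1) hdeg hsing
    have hoz : orderOf x = orderOf z := orb_orderOf_eq (congrArg Subtype.val hvz)
    have hpq : p ∣ q := hp.dvd_of_dvd_pow (show p ∣ q ^ a by rw [← hxa, hoz]; exact hpz)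
    exact hqp ((Nat.prime_dvd_prime_iff_eq hp hq).mp hpq).symm
  -- invariant propagated along the graph
  set I : Vertex A G → Prop := fun v => ∃ u u₁ : G, u ≠ 1 ∧ u₁ ≠ 1 ∧
      (∃ a, orderOf u = q ^ a) ∧ (∃ b, orderOf u₁ = q ^ b) ∧ Commute u u₁ ∧
      Quotient.mk (MulAction.orbitRel A G) u = v.1 ∧
      Quotient.mk (MulAction.orbitRel A G) u₁ ≠ v.1 with hI
  have step : ∀ v v' : Vertex A G, I v → (commGraph A G).Adj v v' → I v' := by
    rintro v v' ⟨u, u₁, hu1, hu11, hua, hub, hcomm', hmk, hmk1⟩ ⟨hvv, x, yy, hx, hy, hcxy⟩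
    obtain ⟨aa, haa⟩ := MulAction.mem_orbit_iff.mp (Quotient.exact (hx.trans hmk.symm))
    -- haa : aa • u = x
    set u₁' := aa • u₁ with hu₁'
    have hmku : Quotient.mk (MulAction.orbitRel A G) u₁' =
        Quotient.mk (MulAction.orbitRel A G) u₁ := Quotient.sound (MulAction.mem_orbit u₁ aa)
    have hcxu : Commute x u₁' := by
      have h1 : aa • (u * u₁) = aa • (u₁ * u) := congrArg _ hcomm'
      rw [smul_mul', smul_mul', haa] at h1
      exact h1
    have hx1 : x ≠ 1 := by
      intro h
      exact v.2 (by rw [← hx, h])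
    have hy1' : yy ≠ 1 := by
      intro h
      exact v'.2 (by rw [← hy, h])
    have hxqel : ∃ a, orderOf x = q ^ a := by
      obtain ⟨a0, h0⟩ := hua
      exact ⟨a0, by rw [← h0]; exact orb_orderOf_eq (hx.trans hmk.symm)⟩
    have hu₁'qel : ∃ b, orderOf u₁' = q ^ b := by
      obtain ⟨b0, h0⟩ := hub
      exact ⟨b0, by rw [← h0]; exact orb_orderOf_eq hmku⟩
    have hu₁'1 : u₁' ≠ 1 := by
      intro h
      have h2 := orb_orderOf_eq hmku
      rw [h, orderOf_one] at h2
      exact hu11 (orderOf_eq_one_iff.mp h2.symm)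
    have hneu : Quotient.mk (MulAction.orbitRel A G) u₁' ≠
        Quotient.mk (MulAction.orbitRel A G) x := by
      rw [hmku, hx]
      exact hmk1
    have hyyqel : ∃ c, orderOf yy = q ^ c :=
      key x u₁' hx1 hxqel hu₁'1 hu₁'qel hcxu hneu yy hcxy
    refine ⟨yy, x, hy1', hx1, hyyqel, hxqel, hcxy.symm, hy, ?_⟩
    rw [hx]
    exact fun h => hvv (Subtype.ext h)
  have walkstep : ∀ (v v' : Vertex A G), (commGraph A G).Walk v v' → I v → I v' := by
    intro v v' w
    induction w with
    | nil => exact id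
    | cons h _ ih => exact fun hv => ih (step _ _ hv h)
  obtain ⟨w⟩ := hF.1.preconnected (vert A G d hd1) (vert A G z hz1)
  have hIz : I (vert A G z hz1) := walkstep _ _ w ⟨d, y, hd1, hy1, hdq, hyq, hcomm, rfl, hne⟩
  obtain ⟨u, u₁, hu1, -, ⟨a, ha⟩, -, -, hmk, -⟩ := hIz
  have hoz : orderOf z = q ^ a := by
    rw [← ha]
    exact (orb_orderOf_eq hmk).symm
  have hpq : p ∣ q := hp.dvd_of_dvd_pow (show p ∣ q ^ a from hoz ▸ hpz)
  exact hqp ((Nat.prime_dvd_prime_iff_eq hp hq).mp hpq).symm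

end Aux6

open Paper MulAction in
/-- For an `A`-invariant subgroup `H` of `G` and any prime `q ≠ p`: every Sylow
`q`-subgroup `Q` of `G` satisfies `Q ≤ H` or `Q ∩ H = 1`. In particular
`gcd(|H|, [G:H])` is a power of `p`. -/
theorem statement6 (G A : Type*) [Group G] [Finite G] [Group A] [Finite A]
    [MulDistribMulAction A G]
    (hπ : 2 ≤ (Nat.card G).primeFactors.card)
    (hF : IsFGraph (commGraph A G))
    (z : G) (hz1 : z ≠ 1)
    (hsing : 3 ≤ ((commGraph A G).neighborSet (vert A G z hz1)).ncard)
    (p : ℕ) (hp : p.Prime) (hpz : p ∣ orderOf z)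
    (H : Subgroup G) (hH : AInv A G H) :
    (∀ q : ℕ, q.Prime → q ≠ p → ∀ Q : Sylow q G,
      (Q : Subgroup G) ≤ H ∨ (Q : Subgroup G) ⊓ H = ⊥) ∧
    (∃ k : ℕ, Nat.gcd (Nat.card H) H.index = p ^ k) := by
  classical
  have part1 : ∀ q : ℕ, q.Prime → q ≠ p → ∀ Q : Sylow q G,
      (Q : Subgroup G) ≤ H ∨ (Q : Subgroup G) ⊓ H = ⊥ := by
    intro q hq hqp Q
    by_contra hcon
    push_neg at hcon
    obtain ⟨hQH, hQHb⟩ := hcon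
    obtain ⟨y₀, hy₀Q, hy₀H⟩ := SetLike.not_le_iff_exists.mp hQH
    obtain ⟨⟨x₀, hx₀⟩, hx₀1⟩ := Subgroup.ne_bot_iff_exists_ne_one.mp hQHb
    have hx₀Q : x₀ ∈ (Q : Subgroup G) := hx₀.1
    have hx₀H : x₀ ∈ H := hx₀.2
    have hx₀1' : x₀ ≠ 1 := by
      intro h
      exact hx₀1 (Subtype.ext h)
    have hy₀1 : y₀ ≠ 1 := fun h => hy₀H (h ▸ H.one_mem)
    have qel : ∀ x ∈ (Q : Subgroup G), ∃ k, orderOf x = q ^ k := by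
      intro x hx
      obtain ⟨k, hk⟩ := Q.isPGroup' ⟨x, hx⟩
      have hpow : x ^ q ^ k = 1 := by
        have := congrArg Subtype.val hk
        simpa using this
      obtain ⟨j, -, hj⟩ := (Nat.dvd_prime_pow hq).mp (orderOf_dvd_of_pow_eq_one hpow)
      exact ⟨j, hj⟩
    haveI : Fact q.Prime := ⟨hq⟩
    haveI : Nontrivial ↥(Q : Subgroup G) := by
      refine ⟨⟨x₀, hx₀Q⟩, 1, fun h => hx₀1' ?_⟩
      exact congrArg Subtype.val h
    have hcent : Nontrivial (Subgroup.center ↥(Q : Subgroup G)) :=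
      IsPGroup.center_nontrivial Q.isPGroup'
    obtain ⟨c, hc⟩ := exists_ne (1 : ↥(Subgroup.center ↥(Q : Subgroup G)))
    set cg : G := ((c : ↥(Q : Subgroup G)) : G) with hcg
    have hcgQ : cg ∈ (Q : Subgroup G) := (c : ↥(Q : Subgroup G)).2
    have hcg1 : cg ≠ 1 := fun h => hc (Subtype.ext (Subtype.ext h))
    have hcomm : ∀ g ∈ (Q : Subgroup G), Commute cg g := by
      intro g hg
      have h1 := Subgroup.mem_center_iff.mp c.2 ⟨g, hg⟩
      have h2 := congrArg Subtype.val h1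
      have h3 : g * cg = cg * g := by simpa using h2
      exact h3.symm
    by_cases hcH : cg ∈ H
    · refine qel_propagate hF z hz1 hsing hp hq hqp hpz cg y₀ hcg1 hy₀1
        (qel cg hcgQ) (qel y₀ hy₀Q) (hcomm y₀ hy₀Q) ?_
      intro h
      exact hy₀H ((orb_mem_iff H hH h).mpr hcH)
    · refine qel_propagate hF z hz1 hsing hp hq hqp hpz x₀ cg hx₀1' hcg1
        (qel x₀ hx₀Q) (qel cg hcgQ) (hcomm x₀ hx₀Q).symm ?_
      intro h
      exact hcH ((orb_mem_iff H hH h).mpr hx₀H)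
  refine ⟨part1, ?_⟩
  have hcard0 : Nat.card ↥H ≠ 0 := Nat.card_pos.ne'
  have main : ∀ r : ℕ, r.Prime → r ∣ Nat.gcd (Nat.card H) H.index → r = p := by
    intro r hr hrd
    by_contra hrp
    haveI : Fact r.Prime := ⟨hr⟩
    have h1 : r ∣ Nat.card ↥H := hrd.trans (Nat.gcd_dvd_left _ _)
    have h2 : r ∣ H.index := hrd.trans (Nat.gcd_dvd_right _ _)
    haveI : Fintype ↥H := Fintype.ofFinite _
    have h1' : r ∣ Fintype.card ↥H := by rwa [← Nat.card_eq_fintype_card]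
    obtain ⟨h0, hh0⟩ := exists_prime_orderOf_dvd_card r h1'
    have hxH : (h0 : G) ∈ H := h0.2
    have hox : orderOf (h0 : G) = r := by
      rw [← hh0]
      exact orderOf_injective H.subtype H.subtype_injective h0
    have hx1 : (h0 : G) ≠ 1 := by
      intro h
      rw [h, orderOf_one] at hox
      exact hr.one_lt.ne' hox.symm
    have hzp : IsPGroup r (Subgroup.zpowers (h0 : G)) := by
      apply IsPGroup.of_card (n := 1)
      rw [Nat.card_zpowers, hox, pow_one]
    obtain ⟨Q, hQ⟩ := hzp.exists_le_sylow
    rcases part1 r hr hrp Q with hQle | hQbot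
    · have hxQ : (h0 : G) ∈ (Q : Subgroup G) := hQ (Subgroup.mem_zpowers _)
      have hrQ : r ∣ Nat.card ↥(Q : Subgroup G) := by
        have hdvd0 := Subgroup.orderOf_dvd_natCard (Q : Subgroup G) hxQ
        rwa [hox] at hdvd0
      have hdvd1 : r ∣ Nat.gcd (Nat.card ↥(Q : Subgroup G)) (Q : Subgroup G).index :=
        Nat.dvd_gcd hrQ (h2.trans (Subgroup.index_dvd_of_le hQle))
      rw [Q.card_coprime_index] at hdvd1
      exact hr.ne_one (Nat.dvd_one.mp hdvd1)
    · have hmem : (h0 : G) ∈ (Q : Subgroup G) ⊓ H := ⟨hQ (Subgroup.mem_zpowers _), hxH⟩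
      rw [hQbot] at hmem
      exact hx1 (Subgroup.mem_bot.mp hmem)
  have hg0 : Nat.gcd (Nat.card ↥H) H.index ≠ 0 := fun h =>
    hcard0 (Nat.eq_zero_of_gcd_eq_zero_left h)
  exact ⟨_, Nat.eq_prime_pow_of_unique_prime_dvd hg0 fun {d} hd hdd => main d hd hdd⟩
end

section
/- For no nonabelian finite group G with |π(G)| ≥ 2 is the commuting graph of G an F-graph. Here the commuting graph of G is the simple graph whose vertices are the elements of G∖Z(G), two distinct vertices x, y being adjacent iff xy = yx. -/
open MulAction

namespace Paper

/-- The commuting graph of a group `G`: vertices are the noncentral elements of `G`,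
two distinct vertices being adjacent iff they commute. -/
def commutingGraph (G : Type*) [Group G] :
    SimpleGraph {x : G // x ∉ Subgroup.center G} where
  Adj x y := x ≠ y ∧ Commute x.1 y.1
  symm := ⟨by rintro x y ⟨h, hc⟩; exact ⟨h.symm, hc.symm⟩⟩
  loopless := ⟨fun x h => h.1 rfl⟩

end Paper

section Statement19Aux

open Paper

variable {G : Type*} [Group G] [Finite G]

private lemma vertNe {a b : G} {ha : a ∉ Subgroup.center G} {hb : b ∉ Subgroup.center G}
    (h : a ≠ b) : (⟨a, ha⟩ : {x : G // x ∉ Subgroup.center G}) ≠ ⟨b, hb⟩ :=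
  fun he => h (congrArg Subtype.val he)

private lemma comm_central {z : G} (hz : z ∈ Subgroup.center G) (g : G) : Commute g z :=
  Subgroup.mem_center_iff.mp hz g

private lemma mul_central_notMem {g u : G} (hg : g ∉ Subgroup.center G)
    (hu : u ∈ Subgroup.center G) : g * u ∉ Subgroup.center G := fun h =>
  hg (by simpa using mul_mem h (inv_mem hu))

private lemma commute_mul_central {g u v : G} (hu : u ∈ Subgroup.center G)
    (hv : v ∈ Subgroup.center G) : Commute (g * u) (g * v) :=
  (Commute.mul_left (Commute.refl g) ((comm_central hu g).symm)).mul_right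
    (comm_central hv (g * u))

private lemma deg_ge_three {a b c d : G} (ha : a ∉ Subgroup.center G)
    (hb : b ∉ Subgroup.center G) (hc : c ∉ Subgroup.center G) (hd : d ∉ Subgroup.center G)
    (hab : a ≠ b) (hac : a ≠ c) (had : a ≠ d) (hbc : b ≠ c) (hbd : b ≠ d) (hcd : c ≠ d)
    (cab : Commute a b) (cac : Commute a c) (cad : Commute a d) :
    3 ≤ ((commutingGraph G).neighborSet ⟨a, ha⟩).ncard := by
  have hsub : ({⟨b, hb⟩, ⟨c, hc⟩, ⟨d, hd⟩} : Set {x : G // x ∉ Subgroup.center G})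
      ⊆ (commutingGraph G).neighborSet ⟨a, ha⟩ := by
    rintro v (rfl | rfl | rfl)
    · exact ⟨vertNe hab, cab⟩
    · exact ⟨vertNe hac, cac⟩
    · exact ⟨vertNe had, cad⟩
  have h3 : ({⟨b, hb⟩, ⟨c, hc⟩, ⟨d, hd⟩} : Set {x : G // x ∉ Subgroup.center G}).ncard = 3 :=
    Set.ncard_eq_three.mpr ⟨_, _, _, vertNe hbc, vertNe hbd, vertNe hcd, rfl⟩
  rw [← h3]
  exact Set.ncard_le_ncard hsub (Set.toFinite _)

private lemma clique4 (hF : IsFGraph (commutingGraph G)) {a b c d : G}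
    (ha : a ∉ Subgroup.center G) (hb : b ∉ Subgroup.center G)
    (hc : c ∉ Subgroup.center G) (hd : d ∉ Subgroup.center G)
    (hab : a ≠ b) (hac : a ≠ c) (had : a ≠ d) (hbc : b ≠ c) (hbd : b ≠ d) (hcd : c ≠ d)
    (cab : Commute a b) (cac : Commute a c) (cad : Commute a d)
    (cbc : Commute b c) (cbd : Commute b d) (ccd : Commute c d) : False := by
  have h1 := deg_ge_three ha hb hc hd hab hac had hbc hbd hcd cab cac cad
  have h2 := deg_ge_three hb ha hc hd (Ne.symm hab) hbc hbd hac had hcd cab.symm cbc cbd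
  exact hab (congrArg Subtype.val (hF.2 _ _ h1 h2))

private lemma sq_central (hF : IsFGraph (commutingGraph G)) {z : G}
    (hz : z ∈ Subgroup.center G) (hz1 : z ≠ 1) (x : G) : x * x ∈ Subgroup.center G := by
  by_cases hx : x ∈ Subgroup.center G
  · exact mul_mem hx hx
  by_contra hx2
  refine clique4 hF hx (mul_central_notMem hx hz) hx2 (mul_central_notMem hx2 hz)
    ?_ ?_ ?_ ?_ ?_ ?_ ?_ ?_ ?_ ?_ ?_ ?_
  · intro h; exact hz1 (left_eq_mul.mp h)
  · intro h
    have h1 : x = 1 := (mul_left_cancel (a := x) (by rw [mul_one]; exact h)).symm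
    exact hx (by rw [h1]; exact Subgroup.one_mem _)
  · intro h
    have h1 : (1 : G) = x * z := mul_left_cancel (a := x) (by rw [mul_one, ← mul_assoc]; exact h)
    have h2 : x = z⁻¹ := eq_inv_of_mul_eq_one_left h1.symm
    exact hx (by rw [h2]; exact inv_mem hz)
  · intro h
    have h1 : z = x := mul_left_cancel (a := x) h
    exact hx (h1 ▸ hz)
  · intro h
    have h1 : x = x * x := mul_right_cancel h
    have h2 : x = 1 := (mul_left_cancel (a := x) (by rw [mul_one]; exact h1)).symm
    exact hx (by rw [h2]; exact Subgroup.one_mem _)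
  · intro h; exact hz1 (left_eq_mul.mp h)
  · exact (Commute.refl x).mul_right (comm_central hz x)
  · exact (Commute.refl x).mul_right (Commute.refl x)
  · exact ((Commute.refl x).mul_right (Commute.refl x)).mul_right (comm_central hz x)
  · exact (Commute.mul_left (Commute.refl x) ((comm_central hz x).symm)).mul_right
      (Commute.mul_left (Commute.refl x) ((comm_central hz x).symm))
  · have hxz : Commute (x * z) x :=
      Commute.mul_left (Commute.refl x) ((comm_central hz x).symm)
    exact (hxz.mul_right hxz).mul_right (comm_central hz (x * z))
  · exact (Commute.refl (x * x)).mul_right (comm_central hz (x * x))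

private lemma odd_central (hsq : ∀ x : G, x * x ∈ Subgroup.center G) {t : G}
    (hodd : Odd (orderOf t)) : t ∈ Subgroup.center G := by
  obtain ⟨m, hm⟩ := hodd
  have h1 : t = (t * t) ^ (m + 1) := by
    calc t = t ^ orderOf t * t := by rw [pow_orderOf_eq_one, one_mul]
      _ = t ^ (orderOf t + 1) := by rw [pow_succ]
      _ = t ^ (2 * (m + 1)) := by rw [hm]; congr 1
      _ = (t ^ 2) ^ (m + 1) := by rw [pow_mul]
      _ = (t * t) ^ (m + 1) := by rw [pow_two]
  rw [h1]
  exact pow_mem (hsq t) _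

end Statement19Aux

open Paper in
/-- For no nonabelian finite group `G` with `|π(G)| ≥ 2` is the commuting
graph of `G` an `F`-graph. -/
theorem statement19 (G : Type*) [Group G] [Finite G]
    (hnonab : ¬ ∀ a b : G, a * b = b * a)
    (hπ : 2 ≤ (Nat.card G).primeFactors.card) :
    ¬ IsFGraph (commutingGraph G) := by
  intro hF
  push_neg at hnonab
  obtain ⟨g, h, hgh⟩ := hnonab
  have hg : g ∉ Subgroup.center G := fun hgc => hgh (Subgroup.mem_center_iff.mp hgc h).symm
  by_cases hzex : ∃ z ∈ Subgroup.center G, z ≠ (1 : G)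
  · -- nontrivial center
    obtain ⟨z, hz, hz1⟩ := hzex
    have hsq : ∀ x : G, x * x ∈ Subgroup.center G := sq_central hF hz hz1
    obtain ⟨p, hpmem, hp2⟩ :=
      Finset.exists_mem_ne (by omega : 1 < (Nat.card G).primeFactors.card) 2
    have hpp : p.Prime := Nat.prime_of_mem_primeFactors hpmem
    have hpd : p ∣ Nat.card G := Nat.dvd_of_mem_primeFactors hpmem
    have hpodd : Odd p := hpp.odd_of_ne_two hp2
    haveI : Fact p.Prime := ⟨hpp⟩
    obtain ⟨x, hx⟩ := exists_prime_orderOf_dvd_card' p hpd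
    have hxc : x ∈ Subgroup.center G := odd_central hsq (by rw [hx]; exact hpodd)
    have hx1 : x ≠ 1 := by
      intro e; rw [e, orderOf_one] at hx; exact hpp.one_lt.ne' hx.symm
    set c := g * h * g⁻¹ * h⁻¹ with hc
    have hc1 : c ≠ 1 := by
      intro h1
      apply hgh
      have e : g * h = c * (h * g) := by rw [hc]; group
      rw [h1, one_mul] at e
      exact e
    have hcmem : c ∈ Subgroup.center G := by
      have e0 : h * (g * g)⁻¹ = (g * g)⁻¹ * h := Subgroup.mem_center_iff.mp (inv_mem (hsq g)) h
      have e1 : h⁻¹ * (g * g)⁻¹ * h = (g * g)⁻¹ := by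
        calc h⁻¹ * (g * g)⁻¹ * h = h⁻¹ * ((g * g)⁻¹ * h) := by group
          _ = h⁻¹ * (h * (g * g)⁻¹) := by rw [← e0]
          _ = (g * g)⁻¹ := by group
      have e2 : c = ((g * h) * (g * h)) * (h⁻¹ * (g * g)⁻¹ * h) * (h * h)⁻¹ := by
        rw [hc]; group
      rw [e2, e1]
      exact mul_mem (mul_mem (hsq (g * h)) (inv_mem (hsq g))) (inv_mem (hsq h))
    have hstep : g * h * g⁻¹ = c * h := by rw [hc]; group
    have hcc : ∀ a : G, a * c = c * a := fun a => Subgroup.mem_center_iff.mp hcmem a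
    have hc2 : c * c = 1 := by
      have e3 : (g * g) * h * (g * g)⁻¹ = c * c * h := by
        calc (g * g) * h * (g * g)⁻¹ = g * (g * h * g⁻¹) * g⁻¹ := by group
          _ = g * (c * h) * g⁻¹ := by rw [hstep]
          _ = (g * c) * (h * g⁻¹) := by group
          _ = (c * g) * (h * g⁻¹) := by rw [hcc g]
          _ = c * (g * h * g⁻¹) := by group
          _ = c * (c * h) := by rw [hstep]
          _ = c * c * h := by group
      have e4 : (g * g) * h * (g * g)⁻¹ = h := by
        have e0 : h * (g * g) = (g * g) * h := Subgroup.mem_center_iff.mp (hsq g) h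
        calc (g * g) * h * (g * g)⁻¹ = h * (g * g) * (g * g)⁻¹ := by rw [← e0]
          _ = h := by group
      have e5 : c * c * h = 1 * h := by rw [one_mul, ← e3, e4]
      exact mul_right_cancel e5
    have hxnec : x ≠ c := by
      intro e
      have hx2 : x ^ 2 = 1 := by rw [pow_two, e]; exact hc2
      have : p ∣ 2 := by rw [← hx]; exact orderOf_dvd_of_pow_eq_one hx2
      have := Nat.le_of_dvd (by norm_num) this
      have := hpp.two_le
      omega
    have hxcmem : x * c ∈ Subgroup.center G := mul_mem hxc hcmem
    refine clique4 hF (a := g) (b := g * c) (c := g * x) (d := g * (x * c))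
      hg (mul_central_notMem hg hcmem) (mul_central_notMem hg hxc)
      (mul_central_notMem hg hxcmem) ?_ ?_ ?_ ?_ ?_ ?_ ?_ ?_ ?_ ?_ ?_ ?_
    · intro e; exact hc1 (left_eq_mul.mp e)
    · intro e; exact hx1 (left_eq_mul.mp e)
    · intro e
      have h1 : x * c = 1 := (left_eq_mul.mp e)
      have h2 : x = c⁻¹ := eq_inv_of_mul_eq_one_left h1
      have h3 : c⁻¹ = c := inv_eq_of_mul_eq_one_right hc2
      exact hxnec (h2.trans h3)
    · intro e; exact hxnec (mul_left_cancel e).symm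
    · intro e
      have h1 : c = x * c := mul_left_cancel e
      exact hx1 (right_eq_mul.mp h1)
    · intro e
      have h1 : x = x * c := mul_left_cancel e
      exact hc1 (left_eq_mul.mp h1)
    · exact (Commute.refl g).mul_right (comm_central hcmem g)
    · exact (Commute.refl g).mul_right (comm_central hxc g)
    · exact (Commute.refl g).mul_right (comm_central hxcmem g)
    · exact commute_mul_central hcmem hxc
    · exact commute_mul_central hcmem hxcmem
    · exact commute_mul_central hxc hxcmem
  · -- trivial center
    push_neg at hzex
    have hnc1 : ∀ {y : G}, y ≠ 1 → y ∉ Subgroup.center G := fun hy hyc => hy (hzex _ hyc)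
    have hord : ∀ y : G, orderOf y ≤ 4 := by
      intro y
      by_contra hy5
      push_neg at hy5
      have hpow : ∀ i : ℕ, 1 ≤ i → i ≤ 4 → y ^ i ≠ 1 := by
        intro i h1 h4 e
        have := Nat.le_of_dvd (by omega) (orderOf_dvd_of_pow_eq_one e)
        omega
      have key : ∀ a b : ℕ, 1 ≤ a → a < b → b ≤ 4 → y ^ a ≠ y ^ b := by
        intro a b ha hab hb e
        refine hpow (b - a) (by omega) (by omega) ?_
        refine mul_left_cancel (a := y ^ a) ?_
        rw [← pow_add, Nat.add_sub_cancel' hab.le, mul_one]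
        exact e.symm
      exact clique4 hF (a := y ^ 1) (b := y ^ 2) (c := y ^ 3) (d := y ^ 4)
        (hnc1 (hpow 1 (by norm_num) (by norm_num)))
        (hnc1 (hpow 2 (by norm_num) (by norm_num)))
        (hnc1 (hpow 3 (by norm_num) (by norm_num)))
        (hnc1 (hpow 4 (by norm_num) (by norm_num)))
        (key 1 2 (by norm_num) (by norm_num) (by norm_num))
        (key 1 3 (by norm_num) (by norm_num) (by norm_num))
        (key 1 4 (by norm_num) (by norm_num) (by norm_num))
        (key 2 3 (by norm_num) (by norm_num) (by norm_num))
        (key 2 4 (by norm_num) (by norm_num) (by norm_num))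
        (key 3 4 (by norm_num) (by norm_num) (by norm_num))
        ((Commute.refl y).pow_pow 1 2) ((Commute.refl y).pow_pow 1 3)
        ((Commute.refl y).pow_pow 1 4) ((Commute.refl y).pow_pow 2 3)
        ((Commute.refl y).pow_pow 2 4) ((Commute.refl y).pow_pow 3 4)
    have hsub23 : (Nat.card G).primeFactors ⊆ ({2, 3} : Finset ℕ) := by
      intro p hp
      have hpp : p.Prime := Nat.prime_of_mem_primeFactors hp
      haveI : Fact p.Prime := ⟨hpp⟩
      obtain ⟨y, hy⟩ := exists_prime_orderOf_dvd_card' p (Nat.dvd_of_mem_primeFactors hp)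
      have h4 : p ≤ 4 := hy ▸ hord y
      have h2 : 2 ≤ p := hpp.two_le
      have hne4 : p ≠ 4 := by intro e; rw [e] at hpp; norm_num at hpp
      have : p = 2 ∨ p = 3 := by omega
      simp only [Finset.mem_insert, Finset.mem_singleton]
      exact this
    have heq : (Nat.card G).primeFactors = ({2, 3} : Finset ℕ) :=
      Finset.eq_of_subset_of_card_le hsub23 (le_trans (by norm_num) hπ)
    haveI : Fact (Nat.Prime 3) := ⟨by norm_num⟩
    haveI : Fact (Nat.Prime 2) := ⟨by norm_num⟩
    obtain ⟨x, hxord⟩ := exists_prime_orderOf_dvd_card' 3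
      (Nat.dvd_of_mem_primeFactors (by rw [heq]; simp))
    obtain ⟨t, htord⟩ := exists_prime_orderOf_dvd_card' 2
      (Nat.dvd_of_mem_primeFactors (by rw [heq]; simp))
    have hx3 : x ^ 3 = 1 := by rw [← hxord]; exact pow_orderOf_eq_one x
    have hx1 : x ≠ 1 := by intro e; rw [e, orderOf_one] at hxord; norm_num at hxord
    have hx21 : x ^ 2 ≠ 1 := by
      intro e
      have := Nat.le_of_dvd (by norm_num) (hxord ▸ orderOf_dvd_of_pow_eq_one e)
      omega
    have ht1 : t ≠ 1 := by intro e; rw [e, orderOf_one] at htord; norm_num at htord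
    have hinv : x⁻¹ = x ^ 2 :=
      inv_eq_of_mul_eq_one_right (by rw [← pow_succ' x 2]; exact hx3)
    have hcent : ∀ y : G, Commute x y → y = 1 ∨ y = x ∨ y = x ^ 2 := by
      intro y hxy
      by_contra hy
      push_neg at hy
      obtain ⟨hy1, hyx, hyx2⟩ := hy
      have hxy1 : x * y ≠ 1 := by
        intro e
        have : y = x⁻¹ := eq_inv_of_mul_eq_one_right e
        exact hyx2 (this.trans hinv)
      refine clique4 hF (a := x) (b := x ^ 2) (c := y) (d := x * y)
        (hnc1 hx1) (hnc1 hx21) (hnc1 hy1) (hnc1 hxy1) ?_ (Ne.symm hyx) ?_ (Ne.symm hyx2)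
        ?_ ?_ ((Commute.refl x).pow_right 2) hxy ((Commute.refl x).mul_right hxy)
        (hxy.pow_left 2)
        (Commute.mul_right ((Commute.refl x).pow_left 2) (hxy.pow_left 2))
        (hxy.symm.mul_right (Commute.refl y))
      · intro e
        have h1 : x = 1 := (mul_left_cancel (a := x)
          (by rw [mul_one, ← pow_two]; exact e)).symm
        exact hx1 h1
      · intro e
        exact hy1 (mul_left_cancel (a := x) (by rw [mul_one]; exact e)).symm
      · intro e
        have h1 : x * x = x * y := by rw [← pow_two]; exact e
        exact hyx (mul_left_cancel h1).symm
      · intro e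
        exact hx1 (right_eq_mul.mp e)
    have h4 : (x ^ 2) ^ 2 = x := by
      have e : (x ^ 2) ^ 2 = x ^ 3 * x := by group
      rw [e, hx3, one_mul]
    have hnbr : ∀ u v : {a : G // a ∉ Subgroup.center G}, (commutingGraph G).Adj u v →
        (u.1 = x ∨ u.1 = x ^ 2) → (v.1 = x ∨ v.1 = x ^ 2) := by
      rintro u v ⟨hne, hcom⟩ hu
      have hxv : Commute x v.1 := by
        rcases hu with hu | hu
        · rw [hu] at hcom; exact hcom
        · rw [hu] at hcom
          have := hcom.pow_left 2
          rwa [h4] at this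
      have hv1 : v.1 ≠ 1 := by
        intro e
        exact v.2 (by rw [e]; exact Subgroup.one_mem _)
      rcases hcent v.1 hxv with e | e | e
      · exact absurd e hv1
      · exact Or.inl e
      · exact Or.inr e
    have hwalk : ∀ u v : {a : G // a ∉ Subgroup.center G}, (commutingGraph G).Walk u v →
        (u.1 = x ∨ u.1 = x ^ 2) → (v.1 = x ∨ v.1 = x ^ 2) := by
      intro u v w
      induction w with
      | nil => exact id
      | cons hadj p ih => intro hu; exact ih (hnbr _ _ hadj hu)
    obtain ⟨w⟩ := hF.1.preconnected ⟨x, hnc1 hx1⟩ ⟨t, hnc1 ht1⟩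
    have ht2 : t ^ 2 = 1 := by rw [← htord]; exact pow_orderOf_eq_one t
    rcases hwalk _ _ w (Or.inl rfl) with e | e
    · simp only at e
      rw [e, hxord] at htord
      norm_num at htord
    · simp only at e
      have : x = 1 := by
        calc x = (x ^ 2) ^ 2 := h4.symm
          _ = t ^ 2 := by rw [e]
          _ = 1 := ht2
      exact hx1 this
end
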